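/- arXiv:2510.06886 — 2 statements merged into one kernel-verified Lean document; each statement's English description precedes it below -/
import Mathlib

section
/- Let A, B be hoops and p : A → B, s : B → A hoop homomorphisms with p ∘ s = id_B, and let X = {a ∈ A | p(a) = 1} be the kernel of p. Define φ : X² × B → A by φ(x, x', b) = (x → s(b)) · x' and ψ : A → X² × B by ψ(a) = (a → s(p(a)), ((a → s(p(a))) → s(p(a))) → a, p(a)). Then: (i) for every a ∈ A, both components a → s(p(a)) and ((a → s(p(a))) → s(p(a))) → a lie in X; (ii) φ(ψ(a)) = a for all a ∈ A; (iii) ψ(a) lies in the set Y = {(x, x', b) ∈ X² × B | ((x → s(b)) · x') → s(b) = x and ((((x → s(b)) · x') → s(b)) → s(b)) → ((x → s(b)) · x') = x'} for every a ∈ A; and (iv) ψ(φ(x, x', b)) = (x, x', b) for every (x, x', b) ∈ Y, so that ψ and φ restrict to mutually inverse bijections between A and Y. -/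
class Hoop (α : Type*) extends CommMonoid α, HImp α where
  himp_self : ∀ x : α, x ⇨ x = 1
  mul_himp_comm : ∀ x y : α, x * (x ⇨ y) = y * (y ⇨ x)
  mul_himp_assoc : ∀ x y z : α, (x * y) ⇨ z = x ⇨ (y ⇨ z)

/-!
In a hoop, `a ⇨ y = 1` forces `y * (y ⇨ a) = a * (a ⇨ y) = a`, and `a ⇨ ((a ⇨ c) ⇨ c) = 1`
always holds. With `c = s (p a)` this gives `φ (ψ a) = a`, from which membership of `ψ a` in `Y`
follows by rewriting. Conversely, since `x` and `x'` lie in the kernel, `p` sends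
`(x ⇨ s b) * x'` to `(1 ⇨ b) * 1 = b`, and then the defining equations of `Y` are exactly
`ψ (φ (x, x', b)) = (x, x', b)`.
-/

namespace Hoop

variable {α : Type*} [Hoop α]

theorem mul_himp_eq_of_himp_eq_one {a y : α} (h : a ⇨ y = 1) : y * (y ⇨ a) = a := by
  rw [← mul_himp_comm, h, mul_one]

theorem one_himp (x : α) : (1 : α) ⇨ x = x := by
  have h_one : (1 : α) ⇨ x = x * (x ⇨ 1) := by
    simpa only [one_mul] using mul_himp_comm (1 : α) x
  have h_idem : (x ⇨ 1) * ((x ⇨ 1) ⇨ 1) = x ⇨ 1 := by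
    rw [mul_himp_comm, one_mul, ← mul_himp_assoc, one_mul]
  have h_recover : (1 ⇨ x) * ((x ⇨ 1) ⇨ 1) = x := by
    calc (1 ⇨ x) * ((x ⇨ 1) ⇨ 1) = (1 ⇨ x) * ((1 ⇨ x) ⇨ x) := by
          rw [h_one, mul_comm x, mul_himp_assoc, himp_self]
      _ = x := mul_himp_eq_of_himp_eq_one (by rw [← mul_himp_assoc, mul_one, himp_self])
  calc (1 : α) ⇨ x = x * ((x ⇨ 1) * ((x ⇨ 1) ⇨ 1)) := by rw [h_idem, h_one]
    _ = (1 ⇨ x) * ((x ⇨ 1) ⇨ 1) := by rw [← mul_assoc, h_one]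
    _ = x := h_recover

theorem himp_one (x : α) : x ⇨ (1 : α) = 1 := by
  have hx : x * (x ⇨ 1) = x := by rw [mul_himp_comm, one_mul, one_himp]
  calc x ⇨ (1 : α) = ((x ⇨ 1) * x) ⇨ 1 := by rw [mul_comm, hx]
    _ = 1 := by rw [mul_himp_assoc, himp_self]

theorem himp_himp_himp_eq_one (a c : α) : a ⇨ ((a ⇨ c) ⇨ c) = 1 := by
  rw [← mul_himp_assoc, mul_himp_comm, mul_comm, mul_himp_assoc, himp_self, himp_one]

theorem himp_himp_mul_himp (a c : α) : ((a ⇨ c) ⇨ c) * (((a ⇨ c) ⇨ c) ⇨ a) = a :=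
  mul_himp_eq_of_himp_eq_one (himp_himp_himp_eq_one a c)

end Hoop

theorem stmt1_general {A B : Type*} [Hoop A] [Hoop B] (p : A → B) (s : B → A)
    (hpm : ∀ a a' : A, p (a * a') = p a * p a')
    (hpi : ∀ a a' : A, p (a ⇨ a') = p a ⇨ p a')
    (hps : ∀ b : B, p (s b) = b) :
    -- (i) the two components of ψ(a) lie in the kernel X
    (∀ a : A, p (a ⇨ s (p a)) = 1 ∧ p (((a ⇨ s (p a)) ⇨ s (p a)) ⇨ a) = 1) ∧
    -- (ii) φ(ψ(a)) = a
    (∀ a : A,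
      ((a ⇨ s (p a)) ⇨ s (p a)) * (((a ⇨ s (p a)) ⇨ s (p a)) ⇨ a) = a) ∧
    -- (iii) ψ(a) ∈ Y
    (∀ a : A,
      ((((a ⇨ s (p a)) ⇨ s (p a)) * (((a ⇨ s (p a)) ⇨ s (p a)) ⇨ a)) ⇨ s (p a)
        = a ⇨ s (p a)) ∧
      (((((a ⇨ s (p a)) ⇨ s (p a)) * (((a ⇨ s (p a)) ⇨ s (p a)) ⇨ a)) ⇨ s (p a)) ⇨ s (p a)) ⇨
          (((a ⇨ s (p a)) ⇨ s (p a)) * (((a ⇨ s (p a)) ⇨ s (p a)) ⇨ a))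
        = ((a ⇨ s (p a)) ⇨ s (p a)) ⇨ a) ∧
    -- (iv) ψ(φ(x,x',b)) = (x,x',b) for (x,x',b) ∈ Y
    (∀ (x x' : A) (b : B), p x = 1 → p x' = 1 →
      ((x ⇨ s b) * x') ⇨ s b = x →
      ((((x ⇨ s b) * x') ⇨ s b) ⇨ s b) ⇨ ((x ⇨ s b) * x') = x' →
      (((x ⇨ s b) * x') ⇨ s (p ((x ⇨ s b) * x')) = x ∧
        ((((x ⇨ s b) * x') ⇨ s (p ((x ⇨ s b) * x'))) ⇨ s (p ((x ⇨ s b) * x'))) ⇨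
            ((x ⇨ s b) * x') = x' ∧
        p ((x ⇨ s b) * x') = b)) := by
  have recover (a : A) := Hoop.himp_himp_mul_himp a (s (p a))
  refine ⟨fun a => ⟨?_, ?_⟩, recover, fun a => ⟨by rw [recover], by rw [recover]⟩, ?_⟩
  · rw [hpi, hps, Hoop.himp_self]
  · rw [hpi, hpi, hpi, hps, Hoop.himp_self, Hoop.one_himp, Hoop.himp_self]
  · intro x x' b hx hx' hY₁ hY₂
    have hb : p ((x ⇨ s b) * x') = b := by
      rw [hpm, hpi, hps, hx, hx', Hoop.one_himp, mul_one]
    rw [hb]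
    exact ⟨hY₁, hY₂, rfl⟩

/-- Given a split epimorphism of hoops `p : A → B` with section `s` and kernel
`X = {a | p a = 1}`, the maps `φ(x,x',b) = (x → s b) · x'` and
`ψ(a) = (a → s(p a), ((a → s(p a)) → s(p a)) → a, p a)` satisfy:
(i) both components of `ψ(a)` lie in `X`;
(ii) `φ(ψ(a)) = a`;
(iii) `ψ(a)` lies in the set `Y`;
(iv) `ψ(φ(x,x',b)) = (x,x',b)` for `(x,x',b) ∈ X² × B` lying in `Y`. -/
theorem stmt1 {A B : Type*} [Hoop A] [Hoop B] (p : A → B) (s : B → A)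
    (hp1 : p 1 = 1) (hpm : ∀ a a' : A, p (a * a') = p a * p a')
    (hpi : ∀ a a' : A, p (a ⇨ a') = p a ⇨ p a')
    (hs1 : s 1 = 1) (hsm : ∀ b b' : B, s (b * b') = s b * s b')
    (hsi : ∀ b b' : B, s (b ⇨ b') = s b ⇨ s b')
    (hps : ∀ b : B, p (s b) = b) :
    -- (i) the two components of ψ(a) lie in the kernel X
    (∀ a : A, p (a ⇨ s (p a)) = 1 ∧ p (((a ⇨ s (p a)) ⇨ s (p a)) ⇨ a) = 1) ∧
    -- (ii) φ(ψ(a)) = a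
    (∀ a : A,
      ((a ⇨ s (p a)) ⇨ s (p a)) * (((a ⇨ s (p a)) ⇨ s (p a)) ⇨ a) = a) ∧
    -- (iii) ψ(a) ∈ Y
    (∀ a : A,
      ((((a ⇨ s (p a)) ⇨ s (p a)) * (((a ⇨ s (p a)) ⇨ s (p a)) ⇨ a)) ⇨ s (p a)
        = a ⇨ s (p a)) ∧
      (((((a ⇨ s (p a)) ⇨ s (p a)) * (((a ⇨ s (p a)) ⇨ s (p a)) ⇨ a)) ⇨ s (p a)) ⇨ s (p a)) ⇨
          (((a ⇨ s (p a)) ⇨ s (p a)) * (((a ⇨ s (p a)) ⇨ s (p a)) ⇨ a))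
        = ((a ⇨ s (p a)) ⇨ s (p a)) ⇨ a) ∧
    -- (iv) ψ(φ(x,x',b)) = (x,x',b) for (x,x',b) ∈ Y
    (∀ (x x' : A) (b : B), p x = 1 → p x' = 1 →
      ((x ⇨ s b) * x') ⇨ s b = x →
      ((((x ⇨ s b) * x') ⇨ s b) ⇨ s b) ⇨ ((x ⇨ s b) * x') = x' →
      (((x ⇨ s b) * x') ⇨ s (p ((x ⇨ s b) * x')) = x ∧
        ((((x ⇨ s b) * x') ⇨ s (p ((x ⇨ s b) * x'))) ⇨ s (p ((x ⇨ s b) * x'))) ⇨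
            ((x ⇨ s b) * x') = x' ∧
        p ((x ⇨ s b) * x') = b)) :=
  stmt1_general p s hpm hpi hps
end

section
/- Let A, B be basic hoops and p : A → B, s : B → A homomorphisms with p ∘ s = id_B and with s a strong section, let X = {a ∈ A | p(a) = 1}, and let g_b(x) = s(b) → x for b ∈ B, x ∈ X. Then condition (B2) holds: for all b₁, b₂, b₃ ∈ B and x, y, z ∈ X, g_{b̃}( g_{b₃→(b₁→b₂)}( g_{b₂→b₁}(x → y) → z ) → ( g_{b₃→(b₂→b₁)}( g_{b₁→b₂}(y → x) → z ) → z ) ) = 1, where b̃ = ((((b₂ → b₁) → b₃) → b₃) → ((b₁ → b₂) → b₃)). -/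
/-- A basic hoop: a hoop satisfying `((x → y) → z) → (((y → x) → z) → z) = 1`. -/
class BasicHoop (α : Type*) extends Hoop α where
  basic : ∀ x y z : α, ((x ⇨ y) ⇨ z) ⇨ (((y ⇨ x) ⇨ z) ⇨ z) = 1

/-!
A hoop is partially ordered by `a ≤ b ↔ a ⇨ b = 1`, and `⇨` is the residual of `*`:
`a ≤ b ⇨ c ↔ a * b ≤ c`. In a basic hoop this gives prelinearity: `m ≤ c` as soon as both
`(a ⇨ b) * m ≤ c` and `(b ⇨ a) * m ≤ c`.

Since `d ⇨ 1 = 1`, the outer factor `g_b̃` is harmless and it suffices that `U * V ≤ z` for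
the two inner implications `U`, `V` of (B2); replacing their premises `s (b₃ ⇨ _)` by the smaller
`s b₁ ⇨ s b₂` and `s b₂ ⇨ s b₁` only enlarges `U` and `V`. Split with prelinearity on
`(s b₁, s b₂)`. In the case `s b₁ ⇨ s b₂`, split on `(s b₂ ⇨ s b₁, x ⇨ y)`: the first case is
modus ponens in `U`; in the second, strongness gives
`(x ⇨ y) ⇨ (s b₂ ⇨ s b₁) ≤ y ⇨ s (b₂ ⇨ b₁) = s (p y) ⇨ s (b₂ ⇨ b₁) = s b₂ ⇨ s b₁`,
and a last split on `(x, y)` feeds either `U` or `V`. The other case is symmetric.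
-/

namespace Hoop

section Hoop

variable {H : Type*} [Hoop H] {a b c : H}

theorem eq_of_himp_eq_one (hab : a ⇨ b = 1) (hba : b ⇨ a = 1) : a = b := by
  simpa [hab, hba] using mul_himp_comm a b

theorem himp_himp_one (a b : H) : (a ⇨ b) ⇨ 1 = 1 :=
  calc (a ⇨ b) ⇨ 1 = ((a ⇨ b) * a) ⇨ a := by rw [mul_himp_assoc, himp_self]
    _ = ((b ⇨ a) * b) ⇨ a := by rw [mul_comm, mul_himp_comm, mul_comm]
    _ = 1 := by rw [mul_himp_assoc, himp_self]

theorem one_himp_s11 (a : H) : 1 ⇨ a = a := by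
  have h : 1 ⇨ a = (a ⇨ 1) * a := by simpa [mul_comm] using mul_himp_comm 1 a
  refine eq_of_himp_eq_one ?_ ?_
  · rw [h, mul_himp_assoc, himp_self, himp_himp_one]
  · rw [← mul_himp_assoc, mul_one, himp_self]

theorem himp_one_s11 (a : H) : a ⇨ 1 = 1 := by
  simpa [one_himp_s11] using himp_himp_one 1 a

theorem himp_eq_one_trans (hab : a ⇨ b = 1) (hbc : b ⇨ c = 1) : a ⇨ c = 1 := by
  have ha : a = (b ⇨ a) * b := by simpa [hab, mul_comm] using mul_himp_comm a b
  rw [ha, mul_himp_assoc, hbc, himp_one_s11]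

instance : PartialOrder H where
  le a b := a ⇨ b = 1
  le_refl := himp_self
  le_trans _ _ _ := himp_eq_one_trans
  le_antisymm _ _ := eq_of_himp_eq_one

theorem le_iff_himp_eq_one : a ≤ b ↔ a ⇨ b = 1 := Iff.rfl

theorem le_himp_iff_mul_le : a ≤ b ⇨ c ↔ a * b ≤ c := by
  simp only [le_iff_himp_eq_one, mul_himp_assoc]

theorem le_himp_iff_mul_le' : a ≤ b ⇨ c ↔ b * a ≤ c := by
  rw [mul_comm, le_himp_iff_mul_le]

theorem himp_mul_le (a b : H) : (a ⇨ b) * a ≤ b := le_himp_iff_mul_le.1 le_rfl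

theorem mul_himp_le (a b : H) : a * (a ⇨ b) ≤ b := le_himp_iff_mul_le'.1 le_rfl

protected theorem le_one (a : H) : a ≤ 1 := himp_one_s11 a

instance : IsOrderedMonoid H where
  mul_le_mul_left _ _ hab _ := le_himp_iff_mul_le.1 (hab.trans (le_himp_iff_mul_le.2 le_rfl))

protected theorem le_himp (a b : H) : b ≤ a ⇨ b :=
  le_himp_iff_mul_le.2 (mul_le_of_le_one_right' (Hoop.le_one a))

protected theorem himp_le_himp_right (hab : a ≤ b) : b ⇨ c ≤ a ⇨ c :=
  le_himp_iff_mul_le.2 ((mul_le_mul_right hab _).trans (himp_mul_le b c))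

end Hoop

section BasicHoop

variable {H : Type*} [BasicHoop H] {a b c m : H}

theorem le_of_himp_mul_le (h₁ : (a ⇨ b) * m ≤ c) (h₂ : (b ⇨ a) * m ≤ c) : m ≤ c := by
  have h := BasicHoop.basic a b (m ⇨ c)
  rwa [le_iff_himp_eq_one.1 (le_himp_iff_mul_le.2 h₁), one_himp_s11,
    le_iff_himp_eq_one.1 (le_himp_iff_mul_le.2 h₂), one_himp_s11] at h

variable {a₁ a₂ x y : H}

theorem himp_mul_mul_himp_le (z : H) (hy : y ⇨ (a₂ ⇨ a₁) ≤ a₂ ⇨ a₁) :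
    (a₁ ⇨ a₂) * (((a₁ ⇨ a₂) ⇨ (((a₂ ⇨ a₁) ⇨ (x ⇨ y)) ⇨ z)) *
      ((a₂ ⇨ a₁) ⇨ (((a₁ ⇨ a₂) ⇨ (y ⇨ x)) ⇨ z))) ≤ z := by
  set U := (a₁ ⇨ a₂) ⇨ (((a₂ ⇨ a₁) ⇨ (x ⇨ y)) ⇨ z)
  set V := (a₂ ⇨ a₁) ⇨ (((a₁ ⇨ a₂) ⇨ (y ⇨ x)) ⇨ z)
  set m := (a₁ ⇨ a₂) * (U * V)
  have hU : m ≤ ((a₂ ⇨ a₁) ⇨ (x ⇨ y)) ⇨ z :=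
    calc m ≤ (a₁ ⇨ a₂) * U := mul_le_mul_right (mul_le_of_le_one_right' (Hoop.le_one V)) _
      _ ≤ _ := mul_himp_le _ _
  have hV : (a₂ ⇨ a₁) * m ≤ ((a₁ ⇨ a₂) ⇨ (y ⇨ x)) ⇨ z :=
    calc (a₂ ⇨ a₁) * m ≤ (a₂ ⇨ a₁) * V := mul_le_mul_right
          (mul_le_of_le_one_of_le (Hoop.le_one _) (mul_le_of_le_one_left' (Hoop.le_one U))) _
      _ ≤ _ := mul_himp_le _ _
  have h_imp : ((a₂ ⇨ a₁) ⇨ (x ⇨ y)) * m ≤ z := le_himp_iff_mul_le'.1 hU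
  have h_xy : (x ⇨ y) * m ≤ z := (mul_le_mul_left (Hoop.le_himp _ _) m).trans h_imp
  have h_yx : (y ⇨ x) * ((a₂ ⇨ a₁) * m) ≤ z :=
    (mul_le_mul_left (Hoop.le_himp (a₁ ⇨ a₂) _) _).trans (le_himp_iff_mul_le'.1 hV)
  have h_rev : (a₂ ⇨ a₁) * m ≤ z :=
    le_of_himp_mul_le (a := x) (b := y)
      ((mul_le_mul_right (mul_le_of_le_one_left' (Hoop.le_one _)) _).trans h_xy) h_yx
  have h_absorb : (x ⇨ y) ⇨ (a₂ ⇨ a₁) ≤ a₂ ⇨ a₁ :=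
    (Hoop.himp_le_himp_right (Hoop.le_himp x y)).trans hy
  exact le_of_himp_mul_le h_imp ((mul_le_mul_left h_absorb m).trans h_rev)

theorem himp_mul_himp_le_of_himp_le (z : H) (hx : x ⇨ (a₁ ⇨ a₂) ≤ a₁ ⇨ a₂)
    (hy : y ⇨ (a₂ ⇨ a₁) ≤ a₂ ⇨ a₁) :
    ((a₁ ⇨ a₂) ⇨ (((a₂ ⇨ a₁) ⇨ (x ⇨ y)) ⇨ z)) *
      ((a₂ ⇨ a₁) ⇨ (((a₁ ⇨ a₂) ⇨ (y ⇨ x)) ⇨ z)) ≤ z := by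
  refine le_of_himp_mul_le (a := a₁) (b := a₂) (himp_mul_mul_himp_le z hy) ?_
  rw [mul_comm ((a₁ ⇨ a₂) ⇨ _)]
  exact himp_mul_mul_himp_le z hx

end BasicHoop

end Hoop

theorem stmt11_general {A B : Type*} [BasicHoop A] [BasicHoop B] (p : A → B) (s : B → A)
    (hs1 : s 1 = 1)
    (hsi : ∀ b b' : B, s (b ⇨ b') = s b ⇨ s b')
    (hss : ∀ (a : A) (b : B), a ⇨ s b = s (p a) ⇨ s b) :
    ∀ (b₁ b₂ b₃ : B) (x y z : A), p x = 1 → p y = 1 → p z = 1 →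
      s ((((b₂ ⇨ b₁) ⇨ b₃) ⇨ b₃) ⇨ ((b₁ ⇨ b₂) ⇨ b₃)) ⇨
          ((s (b₃ ⇨ (b₁ ⇨ b₂)) ⇨ ((s (b₂ ⇨ b₁) ⇨ (x ⇨ y)) ⇨ z)) ⇨
            ((s (b₃ ⇨ (b₂ ⇨ b₁)) ⇨ ((s (b₁ ⇨ b₂) ⇨ (y ⇨ x)) ⇨ z)) ⇨ z)) = 1 := by
  intro b₁ b₂ b₃ x y z hx hy _
  have hx' : x ⇨ (s b₁ ⇨ s b₂) ≤ s b₁ ⇨ s b₂ := by rw [← hsi, hss, hx, hs1, Hoop.one_himp_s11]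
  have hy' : y ⇨ (s b₂ ⇨ s b₁) ≤ s b₂ ⇨ s b₁ := by rw [← hsi, hss, hy, hs1, Hoop.one_himp_s11]
  simp only [hsi]
  refine Hoop.le_iff_himp_eq_one.1 (Hoop.le_himp_iff_mul_le.2 (Hoop.le_himp_iff_mul_le.2 ?_))
  rw [mul_assoc]
  refine mul_le_of_le_one_of_le (Hoop.le_one _) ?_
  calc _ ≤ _ := mul_le_mul' (Hoop.himp_le_himp_right (Hoop.le_himp (s b₃) _))
          (Hoop.himp_le_himp_right (Hoop.le_himp (s b₃) _))
    _ ≤ z := Hoop.himp_mul_himp_le_of_himp_le z hx' hy'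

/-- For a split epimorphism of basic hoops `p : A → B` with strong section `s` and
kernel `X = {a | p a = 1}`, the induced action `g_b(x) = s b → x` satisfies
condition (B2). -/
theorem stmt11 {A B : Type*} [BasicHoop A] [BasicHoop B] (p : A → B) (s : B → A)
    (hp1 : p 1 = 1) (hpm : ∀ a a' : A, p (a * a') = p a * p a')
    (hpi : ∀ a a' : A, p (a ⇨ a') = p a ⇨ p a')
    (hs1 : s 1 = 1) (hsm : ∀ b b' : B, s (b * b') = s b * s b')
    (hsi : ∀ b b' : B, s (b ⇨ b') = s b ⇨ s b')
    (hps : ∀ b : B, p (s b) = b)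
    (hss : ∀ (a : A) (b : B), a ⇨ s b = s (p a) ⇨ s b) :
    ∀ (b₁ b₂ b₃ : B) (x y z : A), p x = 1 → p y = 1 → p z = 1 →
      s ((((b₂ ⇨ b₁) ⇨ b₃) ⇨ b₃) ⇨ ((b₁ ⇨ b₂) ⇨ b₃)) ⇨
          ((s (b₃ ⇨ (b₁ ⇨ b₂)) ⇨ ((s (b₂ ⇨ b₁) ⇨ (x ⇨ y)) ⇨ z)) ⇨
            ((s (b₃ ⇨ (b₂ ⇨ b₁)) ⇨ ((s (b₁ ⇨ b₂) ⇨ (y ⇨ x)) ⇨ z)) ⇨ z)) = 1 :=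
  stmt11_general p s hs1 hsi hss
end
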